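/- Let H be a Hopf *-algebra with a modular pair in involution (δ, σ) such that σ* = σ. Define w_n on H^⊗n by w_n(h^1 ⊗ ... ⊗ h^n) = σ S^{-1}((h^n)*) ⊗ ... ⊗ σ S^{-1}((h^1)*). Then w_n is an involution: w_n² = Id. -/

import Mathlib

/-! Since `S(h*) = S⁻¹(h)*` and `σ* = σ`, the star of one factor `σ S⁻¹(x*)` is `S(x) σ`, so applying
the factor map twice gives `σ S⁻¹(S(x) σ) = σ σ⁻¹ x = x`; the reversal of the factors undoes itself. -/

open TensorProduct

variable {k H : Type*}

/-- The twisted antipode `S_δ(h) = δ(h_(1)) S(h_(2))`. -/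
noncomputable def twistedAntipode [Field k] [Ring H] [Algebra k H]
    (comul : H →ₗ[k] H ⊗[k] H) (δ : H →ₗ[k] k) (S : H →ₗ[k] H) : H →ₗ[k] H :=
  (TensorProduct.lift (LinearMap.mk₂ k (fun x y => δ x • S y)
    (fun x x' y => by simp [add_smul])
    (fun c x y => by simp [mul_smul])
    (fun x y y' => by simp [smul_add])
    (fun c x y => by simp only [map_smul]; rw [smul_comm]))).comp comul

/-- The candidate involution on `H^⊗n`, on elementary tensors:
`w_n(h^1⊗...⊗h^n) = σS⁻¹((h^n)*) ⊗ ... ⊗ σS⁻¹((h^1)*)`. -/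
noncomputable def hopfWtup [Ring H] [Star H] (Sinv : H → H) (σ : H) (n : ℕ)
    (h : Fin n → H) : Fin n → H :=
  fun j => σ * Sinv (star (h (Fin.rev j)))

theorem star_apply_star_of_apply_star [InvolutiveStar H] (S Sinv : H → H)
    (hstarS : ∀ h, S (star h) = star (Sinv h)) (x : H) :
    star (Sinv (star x)) = S x := by
  rw [← hstarS, star_star]

theorem involutive_mul_apply_star [Monoid H] [StarMul H] (S Sinv : H → H) (σ σi : H)
    (hSinvS : ∀ h, Sinv (S h) = h) (hSinvanti : ∀ a b, Sinv (a * b) = Sinv b * Sinv a)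
    (hstarS : ∀ h, S (star h) = star (Sinv h))
    (hσ : σ * σi = 1) (hSinvσ : Sinv σ = σi) (hstarσ : star σ = σ) :
    Function.Involutive fun x => σ * Sinv (star x) := by
  intro x
  calc σ * Sinv (star (σ * Sinv (star x)))
      = σ * Sinv (S x * σ) := by
        rw [star_mul, hstarσ, star_apply_star_of_apply_star S Sinv hstarS]
    _ = σ * σi * x := by rw [hSinvanti, hSinvσ, hSinvS, mul_assoc]
    _ = x := by rw [hσ, one_mul]

theorem hopfWtup_involutive
    [Field k]
    [Ring H] [Algebra k H] [StarRing H]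
    (S Sinv : H →ₗ[k] H) (σ σi : H)
    -- the antipode is invertible with inverse `Sinv`, and both are anti-multiplicative:
    (hSinvS : ∀ h, Sinv (S h) = h)
    (hSinvanti : ∀ a b : H, Sinv (a * b) = Sinv b * Sinv a)
    -- Hopf *-algebra compatibility `S(h*) = S⁻¹(h)*`:
    (hstarS : ∀ h : H, S (star h) = star (Sinv h))
    -- σ is group-like and invertible:
    (hσ : σ * σi = 1)
    (hSinvσ : Sinv σ = σi)
    -- (δ, σ) is a modular pair in involution, and σ is self-adjoint:
    (hstarσ : star σ = σ)
    (n : ℕ) (h : Fin n → H) :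
    hopfWtup Sinv σ n (hopfWtup Sinv σ n h) = h := by
  funext j
  simpa only [hopfWtup, Fin.rev_rev] using
    involutive_mul_apply_star S Sinv σ σi hSinvS hSinvanti hstarS hσ hSinvσ hstarσ (h j)
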